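/- arXiv:1109.6129 — 2 statements merged into one kernel-verified Lean document; each statement's English description precedes it below -/
import Mathlib

section
/- Let u_i, u_j : ℝ × ℝ → ℝ be measurable, bounded, Lipschitz in the first argument uniformly in the second, T-periodic and zero-average in the second argument. Then there exist constants k₁,…,k₅ ≥ 0 such that for all t₀ ∈ ℝ, t ≥ t₀, ω > 0: |∫_{t₀}^{t} ( ω u_i(τ, ωτ) ∫_{t₀}^{τ} u_j(s, ωs) ds − (1/T) ∫₀^{T} u_i(τ, θ) ∫₀^{θ} u_j(τ, r) dr dθ ) dτ| ≤ k₁(t−t₀)²/ω + k₂(t−t₀)/ω + k₃/ω + k₄/ω² + k₅/ω³. -/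
/-!
Write `V(s, θ) = ∫₀^θ u_j(s, r) dr`; it is `T`-periodic in `θ` because `u_j` has zero mean. The
inner integral `∫_{t₀}^τ u_j(s, ωs) ds` equals `(V(τ, ωτ) - V(t₀, ωt₀)) / ω` up to `R(τ) / ω`, where
`R` is `O(1 + (τ - t₀))` and `O(1)`-Lipschitz. The integrand is therefore
`R(τ) u_i(τ, ωτ) + (u_i V - ⟨u_i V⟩)(τ, ωτ) - V(t₀, ωt₀) u_i(τ, ωτ)`: each term is a zero-mean
periodic fast oscillation against a slowly varying weight. Cut `[t₀, t]` into fast periods of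
length `T / ω`; freezing the slow variables on one period leaves the integral of a zero-mean
periodic function, which vanishes, and the error is `O((T / ω)²)` per period.
-/

open MeasureTheory Set Function intervalIntegral
open scoped Interval

lemma abs_intervalIntegral_le_of_abs_le {f : ℝ → ℝ} {a b C : ℝ}
    (h : ∀ x ∈ Ι a b, |f x| ≤ C) : |∫ x in a..b, f x| ≤ C * |b - a| := by
  simpa only [Real.norm_eq_abs] using
    norm_integral_le_of_norm_le_const fun x hx => (Real.norm_eq_abs (f x)).trans_le (h x hx)

lemma abs_intervalIntegral_le_mul_sq {f : ℝ → ℝ} {a h c : ℝ} (hh : 0 ≤ h)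
    (hf : ∀ τ ∈ Ioc a (a + h), |f τ| ≤ c * (τ - a)) :
    |∫ τ in a..a + h, f τ| ≤ c * h ^ 2 / 2 := by
  have hlin : IntervalIntegrable (fun τ => c * (τ - a)) volume a (a + h) :=
    (continuous_const.mul (continuous_id.sub continuous_const)).intervalIntegrable _ _
  calc |∫ τ in a..a + h, f τ|
      ≤ ∫ τ in a..a + h, c * (τ - a) := by
        rw [← Real.norm_eq_abs]
        exact norm_integral_le_of_norm_le (by linarith)
          (Filter.Eventually.of_forall fun τ hτ => (Real.norm_eq_abs _).trans_le (hf τ hτ)) hlin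
    _ = c * h ^ 2 / 2 := by
        rw [intervalIntegral.integral_const_mul,
          integral_sub intervalIntegrable_id intervalIntegrable_const, integral_id,
          intervalIntegral.integral_const]
        simp only [smul_eq_mul]
        ring

lemma abs_intervalIntegral_le_of_abs_integral_period_le {f : ℝ → ℝ} {t₀ t h B C : ℝ}
    (hh : 0 < h) (hC : 0 ≤ C) (ht : t₀ ≤ t) (hf : ∀ a b, IntervalIntegrable f volume a b)
    (hB : ∀ τ ∈ Icc t₀ t, |f τ| ≤ B)
    (hper : ∀ a, t₀ ≤ a → a + h ≤ t → |∫ τ in a..a + h, f τ| ≤ C) :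
    |∫ τ in t₀..t, f τ| ≤ C * ((t - t₀) / h) + B * h := by
  have hB0 : 0 ≤ B := (abs_nonneg _).trans (hB t ⟨ht, le_rfl⟩)
  suffices key : ∀ n : ℕ, ∀ a ∈ Icc t₀ t, t - a ≤ n * h →
      |∫ τ in a..t, f τ| ≤ C * ((t - a) / h) + B * h by
    obtain ⟨n, hn⟩ := exists_nat_ge ((t - t₀) / h)
    exact key n t₀ ⟨le_rfl, ht⟩ ((div_le_iff₀ hh).1 hn)
  intro n
  induction n with
  | zero =>
    intro a ha hn
    obtain rfl : a = t := by push_cast at hn; linarith [ha.2]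
    simp only [integral_same, abs_zero, sub_self, zero_div, mul_zero, zero_add]
    positivity
  | succ n ih =>
    intro a ha hn
    rcases le_or_gt (t - a) h with hshort | hlong
    · have hbound : |∫ τ in a..t, f τ| ≤ B * |t - a| :=
        abs_intervalIntegral_le_of_abs_le fun τ hτ => by
          rw [uIoc_of_le ha.2] at hτ
          exact hB τ ⟨ha.1.trans hτ.1.le, hτ.2⟩
      rw [abs_of_nonneg (sub_nonneg.2 ha.2)] at hbound
      have : 0 ≤ C * ((t - a) / h) := mul_nonneg hC (div_nonneg (by linarith [ha.2]) hh.le)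
      nlinarith
    · have hrest := ih (a + h) ⟨by linarith [ha.1], by linarith⟩ (by push_cast at hn; linarith)
      calc |∫ τ in a..t, f τ|
          = |(∫ τ in a..a + h, f τ) + ∫ τ in a + h..t, f τ| := by
            rw [integral_add_adjacent_intervals (hf _ _) (hf _ _)]
        _ ≤ C + (C * ((t - (a + h)) / h) + B * h) :=
            (abs_add_le _ _).trans (add_le_add (hper a ha.1 (by linarith)) hrest)
        _ = C * ((t - a) / h) + B * h := by field_simp; ring

lemma periodic_primitive_of_integral_eq_zero {f : ℝ → ℝ} {T : ℝ} (hf : Periodic f T)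
    (hint : ∀ a b, IntervalIntegrable f volume a b) (h0 : ∫ x in (0 : ℝ)..T, f x = 0) :
    Periodic (fun θ => ∫ x in (0 : ℝ)..θ, f x) T := fun θ => by
  simp only [hf.intervalIntegral_add_eq_add 0 θ hint, zero_add, h0, add_zero]

lemma abs_primitive_le_of_periodic {f : ℝ → ℝ} {T C : ℝ} (hT : 0 < T) (hf : Periodic f T)
    (hint : ∀ a b, IntervalIntegrable f volume a b) (h0 : ∫ x in (0 : ℝ)..T, f x = 0)
    (hC : ∀ x, |f x| ≤ C) (θ : ℝ) : |∫ x in (0 : ℝ)..θ, f x| ≤ C * T := by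
  obtain ⟨y, hy, hθy⟩ := (periodic_primitive_of_integral_eq_zero hf hint h0).exists_mem_Ico₀ hT θ
  calc |∫ x in (0 : ℝ)..θ, f x| = |∫ x in (0 : ℝ)..y, f x| := congrArg abs hθy
    _ ≤ C * |y - 0| := abs_intervalIntegral_le_of_abs_le fun x _ => hC x
    _ ≤ C * T := by
        rw [sub_zero, abs_of_nonneg hy.1]
        exact mul_le_mul_of_nonneg_left hy.2.le ((abs_nonneg _).trans (hC 0))

structure IsZeroMeanOscillation (w : ℝ → ℝ → ℝ) (M L T : ℝ) : Prop where
  measurable : Measurable (uncurry w)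
  abs_le : ∀ t θ, |w t θ| ≤ M
  lipschitz : ∀ t₁ t₂ θ, |w t₁ θ - w t₂ θ| ≤ L * |t₁ - t₂|
  periodic : ∀ t, Periodic (w t) T
  integral_eq_zero : ∀ t, ∫ θ in (0 : ℝ)..T, w t θ = 0

noncomputable def fastPrimitive (u : ℝ → ℝ → ℝ) (s θ : ℝ) : ℝ := ∫ r in (0 : ℝ)..θ, u s r

noncomputable def averagingRemainder (u : ℝ → ℝ → ℝ) (ω t₀ τ : ℝ) : ℝ :=
  ω * (∫ s in t₀..τ, u s (ω * s)) - (fastPrimitive u τ (ω * τ) - fastPrimitive u t₀ (ω * t₀))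

namespace IsZeroMeanOscillation

variable {w : ℝ → ℝ → ℝ} {M L T : ℝ}

lemma bound_nonneg (hw : IsZeroMeanOscillation w M L T) : 0 ≤ M :=
  (abs_nonneg _).trans (hw.abs_le 0 0)

lemma lipschitz_nonneg (hw : IsZeroMeanOscillation w M L T) : 0 ≤ L := by
  simpa using (abs_nonneg _).trans (hw.lipschitz 1 0 0)

lemma intervalIntegrable_comp (hw : IsZeroMeanOscillation w M L T) {φ ψ : ℝ → ℝ}
    (hφ : Measurable φ) (hψ : Measurable ψ) (a b : ℝ) :
    IntervalIntegrable (fun τ => w (φ τ) (ψ τ)) volume a b :=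
  (intervalIntegrable_const (c := M)).mono_fun'
    (hw.measurable.comp (hφ.prodMk hψ)).aestronglyMeasurable
    (Filter.Eventually.of_forall fun τ => by simpa only [Real.norm_eq_abs] using hw.abs_le _ _)

lemma intervalIntegrable_section (hw : IsZeroMeanOscillation w M L T) (s a b : ℝ) :
    IntervalIntegrable (w s) volume a b :=
  hw.intervalIntegrable_comp measurable_const measurable_id a b

lemma intervalIntegrable_diag (hw : IsZeroMeanOscillation w M L T) (ω a b : ℝ) :
    IntervalIntegrable (fun τ => w τ (ω * τ)) volume a b :=
  hw.intervalIntegrable_comp measurable_id (measurable_const.mul measurable_id) a b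

lemma intervalIntegrable_section_comp_mul (hw : IsZeroMeanOscillation w M L T) (s ω a b : ℝ) :
    IntervalIntegrable (fun τ => w s (ω * τ)) volume a b :=
  hw.intervalIntegrable_comp measurable_const (measurable_const.mul measurable_id) a b

lemma integral_comp_mul_period_eq_zero (hw : IsZeroMeanOscillation w M L T) (s a : ℝ)
    {ω : ℝ} (hω : ω ≠ 0) : ∫ τ in a..a + T / ω, w s (ω * τ) = 0 := by
  have hshift : ω * (a + T / ω) = ω * a + T := by field_simp
  rw [integral_comp_mul_left (w s) hω, hshift, (hw.periodic s).intervalIntegral_add_eq _ 0,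
    zero_add, hw.integral_eq_zero, smul_zero]

/-- The weight `g` varies slowly, so over one fast period it may be frozen at `g a`; freezing the
slow time of `w` as well leaves a whole period of a zero-mean function. -/
lemma abs_integral_period_mul_le (hw : IsZeroMeanOscillation w M L T) (hT : 0 ≤ T)
    {g : ℝ → ℝ} (hg : Continuous g) {ω : ℝ} (hω : 0 < ω) {a ρ K : ℝ} (hga : |g a| ≤ ρ)
    (hgK : ∀ τ ∈ Ioc a (a + T / ω), |g τ - g a| ≤ K * (τ - a)) :
    |∫ τ in a..a + T / ω, g τ * w τ (ω * τ)| ≤ (K * M + ρ * L) * (T / ω) ^ 2 / 2 := by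
  have hsub : ∫ τ in a..a + T / ω, g τ * w τ (ω * τ) =
      ∫ τ in a..a + T / ω, (g τ * w τ (ω * τ) - g a * w a (ω * τ)) := by
    rw [integral_sub ((hw.intervalIntegrable_diag ω _ _).continuousOn_mul hg.continuousOn)
      ((hw.intervalIntegrable_section_comp_mul a ω _ _).const_mul _),
      intervalIntegral.integral_const_mul, hw.integral_comp_mul_period_eq_zero a a hω.ne',
      mul_zero, sub_zero]
  rw [hsub]
  refine abs_intervalIntegral_le_mul_sq (by positivity) fun τ hτ => ?_
  have hτa : |τ - a| = τ - a := abs_of_pos (sub_pos.2 hτ.1)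
  calc |g τ * w τ (ω * τ) - g a * w a (ω * τ)|
      = |(g τ - g a) * w τ (ω * τ) + g a * (w τ (ω * τ) - w a (ω * τ))| := by ring_nf
    _ ≤ |g τ - g a| * |w τ (ω * τ)| + |g a| * |w τ (ω * τ) - w a (ω * τ)| := by
        rw [← abs_mul, ← abs_mul]; exact abs_add_le _ _
    _ ≤ K * (τ - a) * M + ρ * (L * (τ - a)) := by
        gcongr
        · exact (abs_nonneg _).trans (hgK τ hτ)
        · exact hgK τ hτ
        · exact hw.abs_le _ _
        · exact (abs_nonneg _).trans hga
        · exact hτa ▸ hw.lipschitz _ _ _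
    _ = (K * M + ρ * L) * (τ - a) := by ring

lemma abs_integral_mul_le (hw : IsZeroMeanOscillation w M L T) (hT : 0 < T)
    {g : ℝ → ℝ} (hg : Continuous g) {ω : ℝ} (hω : 0 < ω) {t₀ t ρ K : ℝ} (ht : t₀ ≤ t)
    (hK : 0 ≤ K) (hgρ : ∀ a ∈ Icc t₀ t, |g a| ≤ ρ)
    (hgK : ∀ a τ, a ≤ τ → τ ≤ a + T / ω → |g τ - g a| ≤ K * (τ - a)) :
    |∫ τ in t₀..t, g τ * w τ (ω * τ)| ≤
      (K * M + ρ * L) * T * (t - t₀) / (2 * ω) + ρ * M * T / ω := by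
  have hρ : 0 ≤ ρ := (abs_nonneg _).trans (hgρ t₀ ⟨le_rfl, ht⟩)
  have hM := hw.bound_nonneg
  have hL := hw.lipschitz_nonneg
  have key := abs_intervalIntegral_le_of_abs_integral_period_le (div_pos hT hω)
    (C := (K * M + ρ * L) * (T / ω) ^ 2 / 2) (B := ρ * M) (by positivity) ht
    (fun a b => (hw.intervalIntegrable_diag ω a b).continuousOn_mul hg.continuousOn)
    (fun τ hτ => by rw [abs_mul]; exact mul_le_mul (hgρ τ hτ) (hw.abs_le _ _) (abs_nonneg _) hρ)
    (fun a ha hat => hw.abs_integral_period_mul_le hT.le hg hω (hgρ a ⟨ha, by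
        linarith [div_pos hT hω]⟩) fun τ hτ => hgK a τ hτ.1.le hτ.2)
  refine key.trans_eq ?_
  field_simp

lemma abs_integral_le (hw : IsZeroMeanOscillation w M L T) (hT : 0 < T) {ω : ℝ} (hω : 0 < ω)
    {t₀ t : ℝ} (ht : t₀ ≤ t) :
    |∫ τ in t₀..t, w τ (ω * τ)| ≤ L * T * (t - t₀) / (2 * ω) + M * T / ω := by
  simpa using hw.abs_integral_mul_le hT (g := fun _ => 1) continuous_const hω ht le_rfl (ρ := 1)
    (fun _ _ => by simp) (fun _ _ _ _ => by simp)

lemma fastPrimitive_sub (hw : IsZeroMeanOscillation w M L T) (s θ₁ θ₂ : ℝ) :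
    fastPrimitive w s θ₁ - fastPrimitive w s θ₂ = ∫ r in θ₂..θ₁, w s r :=
  integral_interval_sub_left (hw.intervalIntegrable_section _ _ _)
    (hw.intervalIntegrable_section _ _ _)

lemma periodic_fastPrimitive (hw : IsZeroMeanOscillation w M L T) (s : ℝ) :
    Periodic (fastPrimitive w s) T :=
  periodic_primitive_of_integral_eq_zero (hw.periodic s) (hw.intervalIntegrable_section s)
    (hw.integral_eq_zero s)

lemma abs_fastPrimitive_le (hw : IsZeroMeanOscillation w M L T) (hT : 0 < T) (s θ : ℝ) :
    |fastPrimitive w s θ| ≤ M * T :=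
  abs_primitive_le_of_periodic hT (hw.periodic s) (hw.intervalIntegrable_section s)
    (hw.integral_eq_zero s) (hw.abs_le s) θ

lemma abs_fastPrimitive_sub_left_le (hw : IsZeroMeanOscillation w M L T) (hT : 0 < T)
    (s₁ s₂ θ : ℝ) : |fastPrimitive w s₁ θ - fastPrimitive w s₂ θ| ≤ L * |s₁ - s₂| * T := by
  have hint : ∀ a b, IntervalIntegrable (fun r => w s₁ r - w s₂ r) volume a b := fun a b =>
    (hw.intervalIntegrable_section s₁ a b).sub (hw.intervalIntegrable_section s₂ a b)
  have hsub : ∀ θ, ∫ r in (0 : ℝ)..θ, (w s₁ r - w s₂ r) =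
      fastPrimitive w s₁ θ - fastPrimitive w s₂ θ := fun θ =>
    integral_sub (hw.intervalIntegrable_section _ _ _) (hw.intervalIntegrable_section _ _ _)
  rw [← hsub]
  refine abs_primitive_le_of_periodic hT (fun r => ?_) hint ?_ (fun r => hw.lipschitz s₁ s₂ r) θ
  · simp only [hw.periodic s₁ r, hw.periodic s₂ r]
  · rw [hsub, fastPrimitive, fastPrimitive, hw.integral_eq_zero, hw.integral_eq_zero, sub_zero]

lemma abs_fastPrimitive_sub_right_le (hw : IsZeroMeanOscillation w M L T) (s θ₁ θ₂ : ℝ) :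
    |fastPrimitive w s θ₁ - fastPrimitive w s θ₂| ≤ M * |θ₁ - θ₂| := by
  rw [hw.fastPrimitive_sub]
  exact abs_intervalIntegral_le_of_abs_le fun r _ => hw.abs_le s r

lemma continuous_fastPrimitive (hw : IsZeroMeanOscillation w M L T) (hT : 0 < T) :
    Continuous (uncurry (fastPrimitive w)) :=
  continuous_prod_of_continuous_lipschitzWith' _ M.toNNReal
    (fun s => LipschitzWith.of_dist_le' fun θ₁ θ₂ => by
      simpa only [Real.dist_eq, uncurry_apply_pair] using hw.abs_fastPrimitive_sub_right_le s θ₁ θ₂)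
    (fun θ => (LipschitzWith.of_dist_le' (K := L * T) fun s₁ s₂ => by
      simpa only [Real.dist_eq, uncurry_apply_pair, mul_right_comm] using
        hw.abs_fastPrimitive_sub_left_le hT s₁ s₂ θ).continuous)

lemma continuous_averagingRemainder (hw : IsZeroMeanOscillation w M L T) (hT : 0 < T)
    (ω t₀ : ℝ) : Continuous (averagingRemainder w ω t₀) :=
  ((continuous_primitive (hw.intervalIntegrable_diag ω) t₀).const_mul ω).sub
    (((hw.continuous_fastPrimitive hT).comp
      (continuous_id.prodMk (continuous_const.mul continuous_id))).sub continuous_const)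

lemma abs_averagingRemainder_le (hw : IsZeroMeanOscillation w M L T) (hT : 0 < T) {ω : ℝ}
    (hω : 0 < ω) {t₀ τ : ℝ} (hτ : t₀ ≤ τ) :
    |averagingRemainder w ω t₀ τ| ≤ L * T * (τ - t₀) / 2 + 3 * (M * T) := by
  have hprim : |ω * ∫ s in t₀..τ, w s (ω * s)| ≤ L * T * (τ - t₀) / 2 + M * T := by
    rw [abs_mul, abs_of_pos hω]
    calc ω * |∫ s in t₀..τ, w s (ω * s)|
        ≤ ω * (L * T * (τ - t₀) / (2 * ω) + M * T / ω) := by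
          gcongr; exact hw.abs_integral_le hT hω hτ
      _ = L * T * (τ - t₀) / 2 + M * T := by field_simp
  rw [averagingRemainder]
  linarith [abs_sub (ω * ∫ s in t₀..τ, w s (ω * s))
      (fastPrimitive w τ (ω * τ) - fastPrimitive w t₀ (ω * t₀)),
    abs_sub (fastPrimitive w τ (ω * τ)) (fastPrimitive w t₀ (ω * t₀)),
    hw.abs_fastPrimitive_le hT τ (ω * τ), hw.abs_fastPrimitive_le hT t₀ (ω * t₀)]

/-- Over less than one fast period, freezing the slow time of `w` at `a` changes
`averagingRemainder` by `O(τ - a)`, and the frozen part is exactly an increment of the fast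
primitive. -/
lemma abs_averagingRemainder_sub_le (hw : IsZeroMeanOscillation w M L T) (hT : 0 < T) {ω : ℝ}
    (hω : 0 < ω) (t₀ : ℝ) {a τ : ℝ} (haτ : a ≤ τ) (hτ : τ ≤ a + T / ω) :
    |averagingRemainder w ω t₀ τ - averagingRemainder w ω t₀ a| ≤ 2 * (L * T) * (τ - a) := by
  have hfrozen : ω * ∫ s in a..τ, w a (ω * s) =
      fastPrimitive w a (ω * τ) - fastPrimitive w a (ω * a) := by
    rw [← smul_eq_mul, smul_integral_comp_mul_left (w a) ω, hw.fastPrimitive_sub]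
  have hsplit : averagingRemainder w ω t₀ τ - averagingRemainder w ω t₀ a =
      ω * (∫ s in a..τ, (w s (ω * s) - w a (ω * s))) -
        (fastPrimitive w τ (ω * τ) - fastPrimitive w a (ω * τ)) := by
    rw [integral_sub (hw.intervalIntegrable_diag ω a τ)
      (hw.intervalIntegrable_section_comp_mul a ω a τ), mul_sub, hfrozen, ← integral_interval_sub_left (hw.intervalIntegrable_diag ω t₀ τ)
      (hw.intervalIntegrable_diag ω t₀ a)]
    unfold averagingRemainder
    ring
  have hslow : |ω * ∫ s in a..τ, (w s (ω * s) - w a (ω * s))| ≤ L * T * (τ - a) := by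
    have hint : |∫ s in a..τ, (w s (ω * s) - w a (ω * s))| ≤ L * (τ - a) * |τ - a| :=
      abs_intervalIntegral_le_of_abs_le fun s hs => by
        rw [uIoc_of_le haτ] at hs
        calc |w s (ω * s) - w a (ω * s)| ≤ L * |s - a| := hw.lipschitz _ _ _
          _ ≤ L * (τ - a) := by
              rw [abs_of_pos (sub_pos.2 hs.1)]
              exact mul_le_mul_of_nonneg_left (by linarith [hs.2]) hw.lipschitz_nonneg
    rw [abs_of_nonneg (sub_nonneg.2 haτ)] at hint
    rw [abs_mul, abs_of_pos hω]
    calc ω * |∫ s in a..τ, (w s (ω * s) - w a (ω * s))|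
        ≤ ω * (L * (τ - a) * (T / ω)) := by
          gcongr
          exact hint.trans (mul_le_mul_of_nonneg_left (by linarith)
            (mul_nonneg hw.lipschitz_nonneg (by linarith)))
      _ = L * T * (τ - a) := by field_simp
  have hfast : |fastPrimitive w τ (ω * τ) - fastPrimitive w a (ω * τ)| ≤ L * T * (τ - a) := by
    simpa only [abs_of_nonneg (sub_nonneg.2 haτ), mul_right_comm L] using
      hw.abs_fastPrimitive_sub_left_le hT τ a (ω * τ)
  rw [hsplit]
  linarith [abs_sub (ω * ∫ s in a..τ, (w s (ω * s) - w a (ω * s)))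
    (fastPrimitive w τ (ω * τ) - fastPrimitive w a (ω * τ))]

end IsZeroMeanOscillation

noncomputable def fastAverage (ui uj : ℝ → ℝ → ℝ) (T s : ℝ) : ℝ :=
  ∫ θ in (0 : ℝ)..T, ui s θ * fastPrimitive uj s θ

noncomputable def oscillatingPart (ui uj : ℝ → ℝ → ℝ) (T s θ : ℝ) : ℝ :=
  ui s θ * fastPrimitive uj s θ - fastAverage ui uj T s / T

lemma mul_integral_sub_fastAverage_eq (ui uj : ℝ → ℝ → ℝ) (T ω t₀ τ : ℝ) :
    ω * ui τ (ω * τ) * (∫ s in t₀..τ, uj s (ω * s)) - (1 / T) * fastAverage ui uj T τ =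
      averagingRemainder uj ω t₀ τ * ui τ (ω * τ) + oscillatingPart ui uj T τ (ω * τ) -
        fastPrimitive uj t₀ (ω * t₀) * ui τ (ω * τ) := by
  simp only [averagingRemainder, oscillatingPart]
  ring

section SecondOrder

variable {ui uj : ℝ → ℝ → ℝ} {Mi Mj Li Lj T : ℝ}

lemma intervalIntegrable_mul_fastPrimitive (hi : IsZeroMeanOscillation ui Mi Li T)
    (hj : IsZeroMeanOscillation uj Mj Lj T) (hT : 0 < T) (s a b : ℝ) :
    IntervalIntegrable (fun θ => ui s θ * fastPrimitive uj s θ) volume a b :=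
  (hi.intervalIntegrable_section s a b).mul_continuousOn
    ((hj.continuous_fastPrimitive hT).uncurry_left s).continuousOn

lemma abs_mul_fastPrimitive_le (hi : IsZeroMeanOscillation ui Mi Li T)
    (hj : IsZeroMeanOscillation uj Mj Lj T) (hT : 0 < T) (s θ : ℝ) :
    |ui s θ * fastPrimitive uj s θ| ≤ Mi * (Mj * T) := by
  rw [abs_mul]
  exact mul_le_mul (hi.abs_le s θ) (hj.abs_fastPrimitive_le hT s θ) (abs_nonneg _)
    hi.bound_nonneg

lemma abs_mul_fastPrimitive_sub_le (hi : IsZeroMeanOscillation ui Mi Li T)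
    (hj : IsZeroMeanOscillation uj Mj Lj T) (hT : 0 < T) (s₁ s₂ θ : ℝ) :
    |ui s₁ θ * fastPrimitive uj s₁ θ - ui s₂ θ * fastPrimitive uj s₂ θ| ≤
      (Li * Mj + Mi * Lj) * T * |s₁ - s₂| := by
  calc |ui s₁ θ * fastPrimitive uj s₁ θ - ui s₂ θ * fastPrimitive uj s₂ θ|
      = |(ui s₁ θ - ui s₂ θ) * fastPrimitive uj s₁ θ +
          ui s₂ θ * (fastPrimitive uj s₁ θ - fastPrimitive uj s₂ θ)| := by ring_nf
    _ ≤ |ui s₁ θ - ui s₂ θ| * |fastPrimitive uj s₁ θ| +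
          |ui s₂ θ| * |fastPrimitive uj s₁ θ - fastPrimitive uj s₂ θ| := by
        rw [← abs_mul, ← abs_mul]; exact abs_add_le _ _
    _ ≤ Li * |s₁ - s₂| * (Mj * T) + Mi * (Lj * |s₁ - s₂| * T) := by
        have := hi.lipschitz_nonneg
        gcongr
        · exact hi.lipschitz _ _ _
        · exact hj.abs_fastPrimitive_le hT _ _
        · exact hi.bound_nonneg
        · exact hi.abs_le _ _
        · exact hj.abs_fastPrimitive_sub_left_le hT _ _ _
    _ = (Li * Mj + Mi * Lj) * T * |s₁ - s₂| := by ring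

lemma abs_fastAverage_le (hi : IsZeroMeanOscillation ui Mi Li T)
    (hj : IsZeroMeanOscillation uj Mj Lj T) (hT : 0 < T) (s : ℝ) :
    |fastAverage ui uj T s| ≤ Mi * (Mj * T) * T := by
  rw [fastAverage]
  simpa only [sub_zero, abs_of_pos hT] using abs_intervalIntegral_le_of_abs_le (a := 0) (b := T)
    fun θ _ => abs_mul_fastPrimitive_le hi hj hT s θ

lemma abs_fastAverage_sub_le (hi : IsZeroMeanOscillation ui Mi Li T)
    (hj : IsZeroMeanOscillation uj Mj Lj T) (hT : 0 < T) (s₁ s₂ : ℝ) :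
    |fastAverage ui uj T s₁ - fastAverage ui uj T s₂| ≤
      (Li * Mj + Mi * Lj) * T * |s₁ - s₂| * T := by
  rw [fastAverage, fastAverage, ← integral_sub (intervalIntegrable_mul_fastPrimitive hi hj hT _ _ _)
    (intervalIntegrable_mul_fastPrimitive hi hj hT _ _ _)]
  simpa only [sub_zero, abs_of_pos hT] using abs_intervalIntegral_le_of_abs_le (a := 0) (b := T)
    fun θ _ => abs_mul_fastPrimitive_sub_le hi hj hT s₁ s₂ θ

lemma continuous_fastAverage (hi : IsZeroMeanOscillation ui Mi Li T)
    (hj : IsZeroMeanOscillation uj Mj Lj T) (hT : 0 < T) : Continuous (fastAverage ui uj T) :=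
  (LipschitzWith.of_dist_le' (K := (Li * Mj + Mi * Lj) * T * T) fun s₁ s₂ => by
    simpa only [Real.dist_eq, mul_right_comm _ |s₁ - s₂|] using
      abs_fastAverage_sub_le hi hj hT s₁ s₂).continuous

theorem isZeroMeanOscillation_oscillatingPart (hi : IsZeroMeanOscillation ui Mi Li T)
    (hj : IsZeroMeanOscillation uj Mj Lj T) (hT : 0 < T) :
    IsZeroMeanOscillation (oscillatingPart ui uj T) (2 * (Mi * (Mj * T)))
      (2 * ((Li * Mj + Mi * Lj) * T)) T where
  measurable :=
    (hi.measurable.mul (hj.continuous_fastPrimitive hT).measurable).sub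
      (((continuous_fastAverage hi hj hT).measurable.comp measurable_fst).div_const T)
  abs_le s θ := by
    have hA : |fastAverage ui uj T s / T| ≤ Mi * (Mj * T) := by
      rw [abs_div, abs_of_pos hT, div_le_iff₀ hT]; exact abs_fastAverage_le hi hj hT s
    rw [oscillatingPart]
    linarith [abs_sub (ui s θ * fastPrimitive uj s θ) (fastAverage ui uj T s / T),
      abs_mul_fastPrimitive_le hi hj hT s θ]
  lipschitz s₁ s₂ θ := by
    have hA : |fastAverage ui uj T s₁ / T - fastAverage ui uj T s₂ / T| ≤
        (Li * Mj + Mi * Lj) * T * |s₁ - s₂| := by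
      rw [← sub_div, abs_div, abs_of_pos hT, div_le_iff₀ hT]
      exact abs_fastAverage_sub_le hi hj hT s₁ s₂
    have hsplit : oscillatingPart ui uj T s₁ θ - oscillatingPart ui uj T s₂ θ =
        (ui s₁ θ * fastPrimitive uj s₁ θ - ui s₂ θ * fastPrimitive uj s₂ θ) -
          (fastAverage ui uj T s₁ / T - fastAverage ui uj T s₂ / T) := by
      unfold oscillatingPart; ring
    rw [hsplit]
    linarith [abs_sub (ui s₁ θ * fastPrimitive uj s₁ θ - ui s₂ θ * fastPrimitive uj s₂ θ)
      (fastAverage ui uj T s₁ / T - fastAverage ui uj T s₂ / T),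
      abs_mul_fastPrimitive_sub_le hi hj hT s₁ s₂ θ]
  periodic s θ := by
    simp only [oscillatingPart, hi.periodic s θ, hj.periodic_fastPrimitive s θ]
  integral_eq_zero s := by
    simp only [oscillatingPart]
    rw [integral_sub (intervalIntegrable_mul_fastPrimitive hi hj hT s 0 T) intervalIntegrable_const,
      intervalIntegral.integral_const, ← fastAverage, sub_zero, smul_eq_mul,
      mul_div_cancel₀ _ hT.ne', sub_self]

theorem abs_integral_second_order_le (hi : IsZeroMeanOscillation ui Mi Li T)
    (hj : IsZeroMeanOscillation uj Mj Lj T) (hT : 0 < T) {ω : ℝ} (hω : 0 < ω) {t₀ t : ℝ}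
    (ht : t₀ ≤ t) :
    |∫ τ in t₀..t, (ω * ui τ (ω * τ) * (∫ s in t₀..τ, uj s (ω * s)) -
        (1 / T) * fastAverage ui uj T τ)| ≤
      Li * Lj * T ^ 2 / 4 * (t - t₀) ^ 2 / ω +
        (5 / 2 * Mi * Lj * T ^ 2 + 3 * Li * Mj * T ^ 2) * (t - t₀) / ω +
          6 * Mi * Mj * T ^ 2 / ω := by
  have hR := hi.abs_integral_mul_le hT (hj.continuous_averagingRemainder hT ω t₀) hω ht
    (K := 2 * (Lj * T)) (ρ := Lj * T * (t - t₀) / 2 + 3 * (Mj * T))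
    (mul_nonneg zero_le_two (mul_nonneg hj.lipschitz_nonneg hT.le))
    (fun a ha => (hj.abs_averagingRemainder_le hT hω ha.1).trans (by
      have := hj.lipschitz_nonneg
      gcongr
      exact ha.2))
    (fun a τ haτ hτ => hj.abs_averagingRemainder_sub_le hT hω t₀ haτ hτ)
  have hW := (isZeroMeanOscillation_oscillatingPart hi hj hT).abs_integral_le hT hω ht
  have hV := hi.abs_integral_mul_le hT (g := fun _ => fastPrimitive uj t₀ (ω * t₀))
    continuous_const hω ht le_rfl (fun _ _ => hj.abs_fastPrimitive_le hT _ _)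
    (fun _ _ _ _ => by simp)
  have hRint : IntervalIntegrable (fun τ => averagingRemainder uj ω t₀ τ * ui τ (ω * τ))
      volume t₀ t :=
    (hi.intervalIntegrable_diag ω _ _).continuousOn_mul
      (hj.continuous_averagingRemainder hT ω t₀).continuousOn
  have hWint := (isZeroMeanOscillation_oscillatingPart hi hj hT).intervalIntegrable_diag ω t₀ t
  rw [integral_congr fun τ _ => mul_integral_sub_fastAverage_eq ui uj T ω t₀ τ,
    integral_sub (hRint.add hWint) ((hi.intervalIntegrable_diag ω _ _).const_mul _),
    integral_add hRint hWint]
  refine (abs_sub _ _).trans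
    ((add_le_add ((abs_add_le _ _).trans (add_le_add hR hW)) hV).trans_eq ?_)
  field_simp
  ring

end SecondOrder

/-- Lemma 4 of the paper: second-order averaging estimate. -/
theorem averaging_estimate_second_order (ui uj : ℝ → ℝ → ℝ) (Mi Mj Li Lj T : ℝ) (hT : 0 < T)
    (hmeasi : Measurable (Function.uncurry ui)) (hmeasj : Measurable (Function.uncurry uj))
    (hboundi : ∀ t θ : ℝ, |ui t θ| ≤ Mi) (hboundj : ∀ t θ : ℝ, |uj t θ| ≤ Mj)
    (hlipi : ∀ t₁ t₂ θ : ℝ, |ui t₁ θ - ui t₂ θ| ≤ Li * |t₁ - t₂|)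
    (hlipj : ∀ t₁ t₂ θ : ℝ, |uj t₁ θ - uj t₂ θ| ≤ Lj * |t₁ - t₂|)
    (hperi : ∀ t θ : ℝ, ui t (θ + T) = ui t θ)
    (hperj : ∀ t θ : ℝ, uj t (θ + T) = uj t θ)
    (hzeroi : ∀ t : ℝ, (∫ τ in (0:ℝ)..T, ui t τ) = 0)
    (hzeroj : ∀ t : ℝ, (∫ τ in (0:ℝ)..T, uj t τ) = 0) :
    ∃ k₁ k₂ k₃ k₄ k₅ : ℝ, 0 ≤ k₁ ∧ 0 ≤ k₂ ∧ 0 ≤ k₃ ∧ 0 ≤ k₄ ∧ 0 ≤ k₅ ∧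
      ∀ t₀ t ω : ℝ, t₀ ≤ t → 0 < ω →
        |∫ τ in t₀..t,
            (ω * ui τ (ω * τ) * (∫ s in t₀..τ, uj s (ω * s)) -
              (1 / T) * ∫ θ in (0:ℝ)..T, ui τ θ * ∫ r in (0:ℝ)..θ, uj τ r)| ≤
          k₁ * (t - t₀) ^ 2 / ω + k₂ * (t - t₀) / ω + k₃ / ω + k₄ / ω ^ 2 + k₅ / ω ^ 3 := by
  have hi : IsZeroMeanOscillation ui Mi Li T := ⟨hmeasi, hboundi, hlipi, hperi, hzeroi⟩
  have hj : IsZeroMeanOscillation uj Mj Lj T := ⟨hmeasj, hboundj, hlipj, hperj, hzeroj⟩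
  have hMi := hi.bound_nonneg
  have hMj := hj.bound_nonneg
  have hLi := hi.lipschitz_nonneg
  have hLj := hj.lipschitz_nonneg
  refine ⟨Li * Lj * T ^ 2 / 4, 5 / 2 * Mi * Lj * T ^ 2 + 3 * Li * Mj * T ^ 2, 6 * Mi * Mj * T ^ 2,
    0, 0, by positivity, by positivity, by positivity, le_rfl, le_rfl, fun t₀ t ω ht hω => ?_⟩
  refine (abs_integral_second_order_le hi hj hT hω ht).trans_eq ?_
  rw [zero_div, zero_div, add_zero, add_zero]
end

section
/- Let f : ℝ → ℝ be continuously differentiable with bounded derivative and consider the ODE ẋ = α√ω cos(ωt) + f(x)√ω sin(ωt) with absolutely continuous solution x on [t₀, t]. Then x(t) = x(t₀) + (√ω/ω) r(ωt, x) + ∫_{t₀}^{t} b(ωs, x(s)) ds, where r(ωt, x) = −f(x(t))cos(ωt) + f(x(t₀))cos(ωt₀) + α(sin(ωt) − sin(ωt₀)) and b(ωs, x(s)) = α f'(x(s)) cos²(ωs) + f'(x(s)) f(x(s)) sin(ωs) cos(ωs). -/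
/-!
Let `R(s) = f (x s) cos (ω s) - α sin (ω s)`. Along a solution of
`ẋ = c (α cos (ω t) + f(x) sin (ω t))`, differentiating the fast factors of `(c/ω) R` gives
exactly `-ẋ`, so `x + (c/ω) R` has the derivative
`(c/ω) f'(x) ẋ cos (ω t) = (c²/ω) b(ω t, x)`. The fundamental theorem of calculus then gives the
representation; with `c = √ω` the factor `c²/ω` is `1`.
-/

open Real intervalIntegral

section

variable {f x : ℝ → ℝ} {α c ω : ℝ}

theorem hasDerivAt_add_div_mul_cos_sub_sin {t : ℝ} (hω : ω ≠ 0)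
    (hf : DifferentiableAt ℝ f (x t))
    (hx : HasDerivAt x (c * (α * cos (ω * t) + f (x t) * sin (ω * t))) t) :
    HasDerivAt (fun s => x s + c / ω * (f (x s) * cos (ω * s) - α * sin (ω * s)))
      (c ^ 2 / ω * (α * deriv f (x t) * cos (ω * t) ^ 2 +
        deriv f (x t) * f (x t) * sin (ω * t) * cos (ω * t))) t := by
  have hlin : HasDerivAt (fun s => ω * s) ω t := by
    simpa using (hasDerivAt_id t).const_mul ω
  have hcos := (hasDerivAt_cos (ω * t)).comp t hlin
  have hsin := (hasDerivAt_sin (ω * t)).comp t hlin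
  have hfx := hf.hasDerivAt.comp t hx
  refine (hx.add (((hfx.mul hcos).sub (hsin.const_mul α)).const_mul (c / ω))).congr_deriv ?_
  simp only [Function.comp_apply]
  field_simp
  ring

theorem add_div_mul_cos_sub_sin_sub_eq_integral {t₀ t₁ : ℝ} (hω : ω ≠ 0)
    (hf : ContDiff ℝ 1 f) (ht : t₀ ≤ t₁)
    (hode : ∀ t ∈ Set.Icc t₀ t₁,
      HasDerivAt x (c * (α * cos (ω * t) + f (x t) * sin (ω * t))) t) :
    x t₁ + c / ω * (f (x t₁) * cos (ω * t₁) - α * sin (ω * t₁)) -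
        (x t₀ + c / ω * (f (x t₀) * cos (ω * t₀) - α * sin (ω * t₀))) =
      ∫ s in t₀..t₁, c ^ 2 / ω * (α * deriv f (x s) * cos (ω * s) ^ 2 +
        deriv f (x s) * f (x s) * sin (ω * s) * cos (ω * s)) := by
  rw [integral_eq_sub_of_hasDerivAt]
  · intro t hts
    rw [Set.uIcc_of_le ht] at hts
    exact hasDerivAt_add_div_mul_cos_sub_sin hω (hf.differentiable one_ne_zero _) (hode t hts)
  · have hxc : ContinuousOn x (Set.Icc t₀ t₁) :=
      continuousOn_of_forall_continuousAt fun t ht => (hode t ht).continuousAt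
    have hf' : Continuous (deriv f) := hf.continuous_deriv le_rfl
    have hfc : Continuous f := hf.continuous
    apply ContinuousOn.intervalIntegrable
    rw [Set.uIcc_of_le ht]
    fun_prop

end

theorem extremum_seeking_integral_representation_general
    (f : ℝ → ℝ) (hf : ContDiff ℝ 1 f)
    (α ω t₀ t₁ : ℝ) (hω : 0 < ω) (ht : t₀ ≤ t₁)
    (x : ℝ → ℝ)
    (hode : ∀ t ∈ Set.Icc t₀ t₁,
      HasDerivAt x (α * Real.sqrt ω * Real.cos (ω * t) +
        f (x t) * Real.sqrt ω * Real.sin (ω * t)) t) :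
    x t₁ = x t₀ +
      (Real.sqrt ω / ω) *
        (-(f (x t₁) * Real.cos (ω * t₁)) + f (x t₀) * Real.cos (ω * t₀) +
          α * (Real.sin (ω * t₁) - Real.sin (ω * t₀))) +
      ∫ s in t₀..t₁,
        (α * deriv f (x s) * Real.cos (ω * s) ^ 2 +
          deriv f (x s) * f (x s) * Real.sin (ω * s) * Real.cos (ω * s)) := by
  have hode' : ∀ t ∈ Set.Icc t₀ t₁, HasDerivAt x
      (√ω * (α * cos (ω * t) + f (x t) * sin (ω * t))) t := fun t ht =>
    (hode t ht).congr_deriv (by ring)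
  have hrep := add_div_mul_cos_sub_sin_sub_eq_integral hω.ne' hf ht hode'
  simp only [sq_sqrt hω.le, div_self hω.ne', one_mul] at hrep
  linear_combination hrep

/-- integral representation of the basic extremum seeking ODE after
integration by parts. -/
theorem extremum_seeking_integral_representation
    (f : ℝ → ℝ) (hf : ContDiff ℝ 1 f) (hf' : ∃ C : ℝ, ∀ y : ℝ, |deriv f y| ≤ C)
    (α ω t₀ t₁ : ℝ) (hω : 0 < ω) (hα : 0 < α) (ht : t₀ ≤ t₁)
    (x : ℝ → ℝ) (hx : ContinuousOn x (Set.Icc t₀ t₁))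
    (hode : ∀ t ∈ Set.Icc t₀ t₁,
      HasDerivAt x (α * Real.sqrt ω * Real.cos (ω * t) +
        f (x t) * Real.sqrt ω * Real.sin (ω * t)) t) :
    x t₁ = x t₀ +
      (Real.sqrt ω / ω) *
        (-(f (x t₁) * Real.cos (ω * t₁)) + f (x t₀) * Real.cos (ω * t₀) +
          α * (Real.sin (ω * t₁) - Real.sin (ω * t₀))) +
      ∫ s in t₀..t₁,
        (α * deriv f (x s) * Real.cos (ω * s) ^ 2 +
          deriv f (x s) * f (x s) * Real.sin (ω * s) * Real.cos (ω * s)) :=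
  extremum_seeking_integral_representation_general f hf α ω t₀ t₁ hω ht x hode
end
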